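/- Under the alignment condition there exists a constant c > 0, depending only on h₁, h₂, l and r but not on α, such that for every α > 0, sup over x ∈ ℝ² of |div g_α(x)| ≤ c·α/(l₀ + α). -/

import Mathlib

noncomputable section

/-- The factorized Hamiltonian `H(x₁,x₂) = h₁(x₁)·h₂(x₂)`. -/
def Ham (h₁ h₂ : ℝ → ℝ) : ℝ × ℝ → ℝ := fun x => h₁ x.1 * h₂ x.2

/-- The Hamiltonian vector field `ξ = ∇⊥H = (−h₁h₂', h₁'h₂)`. -/
def xiField (h₁ h₂ : ℝ → ℝ) : ℝ × ℝ → ℝ × ℝ :=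
  fun x => (-(h₁ x.1 * deriv h₂ x.2), deriv h₁ x.1 * h₂ x.2)

/-- The divergence of a vector field on `ℝ²`. -/
def divR2 (V : ℝ × ℝ → ℝ × ℝ) (x : ℝ × ℝ) : ℝ :=
  (fderiv ℝ V x (1, 0)).1 + (fderiv ℝ V x (0, 1)).2

/-- The inertial drift `g_α = β_α ν² Dξ ξ` under the alignment condition. -/
def driftG (h₁ h₂ l r : ℝ → ℝ) (α : ℝ) : ℝ × ℝ → ℝ × ℝ := fun x =>
  (α / (2 * (l (Ham h₁ h₂ x) + α)) * (r (Ham h₁ h₂ x) / l (Ham h₁ h₂ x)) ^ 2) •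
    fderiv ℝ (xiField h₁ h₂) x (xiField h₁ h₂ x)

open Function Set

/-!
Write `g_α = φ_α(H) • F` with `F = Dξ ξ` and `φ_α(s) = α / (2 (l s + α)) · (r s / l s)²`, so that
`div g_α = φ_α(H) div F + φ_α'(H) DH F`. Since `H` takes values in `[-1, 1]`, where `l ≥ l₀`, and
for `a ≥ l₀` both `α / (2 (a + α)) ≤ α / (l₀ + α)` and
`|∂ₐ (α / (2 (a + α)))| ≤ (α / (l₀ + α)) / (2 l₀)`, both `φ_α(H)` and `φ_α'(H)` are
`O(α / (l₀ + α))` uniformly in `α`. The fields `F`, `DF` and `DH`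
are continuous and `L`-periodic in each variable, hence bounded.
-/

section Translation

variable {𝕜 E F : Type*} [NontriviallyNormedField 𝕜] [NormedAddCommGroup E] [NormedSpace 𝕜 E]
  [NormedAddCommGroup F] [NormedSpace 𝕜 F]

protected theorem Function.Periodic.deriv {f : 𝕜 → F} {a : 𝕜} (hf : Periodic f a) :
    Periodic (deriv f) a := fun x => by
  rw [← deriv_comp_add_const, funext hf]

protected theorem Function.Periodic.fderiv {f : E → F} {a : E} (hf : Periodic f a) :
    Periodic (fderiv 𝕜 f) a := fun x => by
  rw [← fderiv_comp_add_right, funext hf]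

theorem Function.Periodic.fderiv_apply_self {ξ : E → E} {a : E} (hξ : Periodic ξ a) :
    Periodic (fun x => fderiv 𝕜 ξ x (ξ x)) a := fun x => by
  simp only [hξ.fderiv x, hξ x]

theorem ContDiff.fderiv_apply_self {ξ : E → E} {n : WithTop ℕ∞} (hξ : ContDiff 𝕜 (n + 1) ξ) :
    ContDiff 𝕜 n (fun x => fderiv 𝕜 ξ x (ξ x)) :=
  (hξ.fderiv_right le_rfl).clm_apply (hξ.of_le le_self_add)

end Translation

section Bounds

variable {E : Type*} [NormedAddCommGroup E] {L₁ L₂ : ℝ}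

theorem Continuous.exists_norm_le_of_periodic_prod {G : ℝ × ℝ → E} (hG : Continuous G)
    (hL₁ : 0 < L₁) (hL₂ : 0 < L₂) (h₁ : Periodic G (L₁, 0)) (h₂ : Periodic G (0, L₂)) :
    ∃ M, ∀ x, ‖G x‖ ≤ M := by
  obtain ⟨M, hM⟩ := (isCompact_Icc.prod isCompact_Icc).exists_bound_of_continuousOn
    (s := Icc 0 L₁ ×ˢ Icc 0 L₂) hG.continuousOn
  refine ⟨M, fun x => ?_⟩
  obtain ⟨y₁, hy₁, hx₁⟩ := Periodic.exists_mem_Ico₀ (c := L₁) (f := fun t => G (t, x.2))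
    (fun t => by simpa using h₁ (t, x.2)) hL₁ x.1
  obtain ⟨y₂, hy₂, hx₂⟩ := Periodic.exists_mem_Ico₀ (c := L₂) (f := fun t => G (y₁, t))
    (fun t => by simpa using h₂ (y₁, t)) hL₂ x.2
  calc ‖G x‖ = ‖G (y₁, y₂)‖ := by rw [← hx₂, ← hx₁]
    _ ≤ M := hM _ ⟨Ico_subset_Icc_self hy₁, Ico_subset_Icc_self hy₂⟩

theorem ContDiff.exists_bound_of_periodic_prod [NormedSpace ℝ E] {f : ℝ × ℝ → E}
    (hf : ContDiff ℝ 1 f) (hL₁ : 0 < L₁) (hL₂ : 0 < L₂) (h₁ : Periodic f (L₁, 0))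
    (h₂ : Periodic f (0, L₂)) :
    ∃ M, ∀ x, ‖f x‖ ≤ M ∧ ‖fderiv ℝ f x‖ ≤ M := by
  obtain ⟨M₀, hM₀⟩ := hf.continuous.exists_norm_le_of_periodic_prod hL₁ hL₂ h₁ h₂
  obtain ⟨M₁, hM₁⟩ := (hf.continuous_fderiv one_ne_zero).exists_norm_le_of_periodic_prod
    hL₁ hL₂ h₁.fderiv h₂.fderiv
  exact ⟨max M₀ M₁, fun x => ⟨(hM₀ x).trans (le_max_left _ _), (hM₁ x).trans (le_max_right _ _)⟩⟩

end Bounds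

section Divergence

variable {φ : ℝ × ℝ → ℝ} {V : ℝ × ℝ → ℝ × ℝ} {x : ℝ × ℝ}

theorem divR2_smul (hφ : DifferentiableAt ℝ φ x) (hV : DifferentiableAt ℝ V x) :
    divR2 (fun y => φ y • V y) x = φ x * divR2 V x + fderiv ℝ φ x (V x) := by
  have hVx : V x = (V x).1 • ((1 : ℝ), (0 : ℝ)) + (V x).2 • ((0 : ℝ), (1 : ℝ)) := by
    ext <;> simp
  rw [divR2, divR2, fderiv_fun_smul hφ hV]
  conv_rhs => rw [hVx]
  simp only [add_apply, smul_apply,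
    ContinuousLinearMap.smulRight_apply, map_add, map_smul, Prod.fst_add, Prod.snd_add,
    Prod.smul_fst, Prod.smul_snd, smul_eq_mul]
  ring

theorem abs_divR2_le (V : ℝ × ℝ → ℝ × ℝ) (x : ℝ × ℝ) : |divR2 V x| ≤ 2 * ‖fderiv ℝ V x‖ := by
  have hunit : ∀ v : ℝ × ℝ, ‖v‖ = 1 → ‖fderiv ℝ V x v‖ ≤ ‖fderiv ℝ V x‖ := fun v hv =>
    ((fderiv ℝ V x).le_opNorm v).trans_eq (by rw [hv, mul_one])
  calc |divR2 V x| ≤ ‖fderiv ℝ V x (1, 0)‖ + ‖fderiv ℝ V x (0, 1)‖ :=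
        (abs_add_le _ _).trans <|
          add_le_add (norm_fst_le (fderiv ℝ V x (1, 0))) (norm_snd_le (fderiv ℝ V x (0, 1)))
    _ ≤ 2 * ‖fderiv ℝ V x‖ := by
        linarith [hunit (1, 0) (by simp [Prod.norm_def]), hunit (0, 1) (by simp [Prod.norm_def])]

theorem abs_divR2_smul_le {φ' : ℝ × ℝ →L[ℝ] ℝ} (hφ : HasFDerivAt φ φ' x)
    (hV : DifferentiableAt ℝ V x) :
    |divR2 (fun y => φ y • V y) x| ≤ |φ x| * (2 * ‖fderiv ℝ V x‖) + ‖φ'‖ * ‖V x‖ := by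
  rw [divR2_smul hφ.differentiableAt hV, hφ.fderiv]
  calc |φ x * divR2 V x + φ' (V x)| ≤ |φ x| * |divR2 V x| + ‖φ' (V x)‖ := by
        rw [← abs_mul]; exact abs_add_le _ _
    _ ≤ _ := add_le_add (mul_le_mul_of_nonneg_left (abs_divR2_le V x) (abs_nonneg _))
        (φ'.le_opNorm _)

end Divergence

section Hamiltonian

variable {h₁ h₂ : ℝ → ℝ} {L : ℝ}

theorem periodic_ham_fst (h : Periodic h₁ L) : Periodic (Ham h₁ h₂) (L, 0) := fun x => by
  simp [Ham, h x.1]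

theorem periodic_ham_snd (h : Periodic h₂ L) : Periodic (Ham h₁ h₂) (0, L) := fun x => by
  simp [Ham, h x.2]

theorem periodic_xiField_fst (h : Periodic h₁ L) : Periodic (xiField h₁ h₂) (L, 0) := fun x => by
  simp [xiField, h x.1, h.deriv x.1]

theorem periodic_xiField_snd (h : Periodic h₂ L) : Periodic (xiField h₁ h₂) (0, L) := fun x => by
  simp [xiField, h x.2, h.deriv x.2]

theorem contDiff_ham {n : WithTop ℕ∞} (hh₁ : ContDiff ℝ n h₁) (hh₂ : ContDiff ℝ n h₂) :
    ContDiff ℝ n (Ham h₁ h₂) :=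
  (hh₁.comp contDiff_fst).mul (hh₂.comp contDiff_snd)

theorem contDiff_xiField {n : WithTop ℕ∞} (hh₁ : ContDiff ℝ (n + 1) h₁)
    (hh₂ : ContDiff ℝ (n + 1) h₂) : ContDiff ℝ n (xiField h₁ h₂) :=
  ((hh₁.of_le le_self_add).comp contDiff_fst |>.mul (hh₂.deriv'.comp contDiff_snd)).neg.prodMk
    ((hh₁.deriv'.comp contDiff_fst).mul ((hh₂.of_le le_self_add).comp contDiff_snd))

theorem ham_mem_Icc (hbd₁ : ∀ t, |h₁ t| ≤ 1) (hbd₂ : ∀ t, |h₂ t| ≤ 1) (x : ℝ × ℝ) :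
    Ham h₁ h₂ x ∈ Icc (-1) 1 :=
  abs_le.mp <| (abs_mul _ _).trans_le <| mul_le_one₀ (hbd₁ x.1) (abs_nonneg _) (hbd₂ x.2)

end Hamiltonian

section DriftCoeff

variable {l r : ℝ → ℝ} {l₀ α s : ℝ}

-- `β_α ν²` with `H(x)` replaced by a scalar `s`.
def driftCoeff (l r : ℝ → ℝ) (α s : ℝ) : ℝ :=
  α / (2 * (l s + α)) * (r s / l s) ^ 2

theorem driftG_eq_smul (h₁ h₂ l r : ℝ → ℝ) (α : ℝ) :
    driftG h₁ h₂ l r α = fun x => driftCoeff l r α (Ham h₁ h₂ x) •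
      fderiv ℝ (xiField h₁ h₂) x (xiField h₁ h₂ x) :=
  rfl

theorem div_two_mul_add_le {a : ℝ} (hl₀ : 0 < l₀) (ha : l₀ ≤ a) (hα : 0 ≤ α) :
    α / (2 * (a + α)) ≤ α / (l₀ + α) :=
  div_le_div_of_nonneg_left hα (by linarith) (by linarith)

theorem hasDerivAt_driftCoeff (hl : DifferentiableAt ℝ l s) (hr : DifferentiableAt ℝ r s)
    (hls : l s ≠ 0) (hlα : l s + α ≠ 0) :
    HasDerivAt (driftCoeff l r α)
      (-(α * deriv l s) / (2 * (l s + α) ^ 2) * (r s / l s) ^ 2 +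
        α / (2 * (l s + α)) * deriv (fun t => (r t / l t) ^ 2) s) s := by
  have hβ : HasDerivAt (fun t => α / (2 * (l t + α)))
      (-(α * deriv l s) / (2 * (l s + α) ^ 2)) s := by
    refine ((hasDerivAt_const s α).fun_div ((hl.hasDerivAt.add_const α).const_mul 2)
      (mul_ne_zero two_ne_zero hlα)).congr_deriv ?_
    field_simp
    ring
  exact hβ.mul ((hr.div hl hls).pow 2).hasDerivAt

theorem abs_driftCoeff_le (hl₀ : 0 < l₀) (hls : l₀ ≤ l s) (hα : 0 ≤ α) :
    |driftCoeff l r α s| ≤ α / (l₀ + α) * (r s / l s) ^ 2 := by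
  have hβ : 0 ≤ α / (2 * (l s + α)) := div_nonneg hα (by linarith)
  rw [driftCoeff, abs_of_nonneg (by positivity)]
  exact mul_le_mul_of_nonneg_right (div_two_mul_add_le hl₀ hls hα) (sq_nonneg _)

theorem abs_deriv_driftCoeff_le (hl₀ : 0 < l₀) (hls : l₀ ≤ l s) (hα : 0 ≤ α)
    (hl : DifferentiableAt ℝ l s) (hr : DifferentiableAt ℝ r s) :
    |deriv (driftCoeff l r α) s| ≤ α / (l₀ + α) *
      (|deriv l s| / (2 * l₀) * (r s / l s) ^ 2 + |deriv (fun t => (r t / l t) ^ 2) s|) := by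
  have hlα : 0 < l s + α := by linarith
  rw [(hasDerivAt_driftCoeff hl hr (by linarith) hlα.ne').deriv]
  have hβ' : |-(α * deriv l s) / (2 * (l s + α) ^ 2)| ≤
      α / (l₀ + α) * (|deriv l s| / (2 * l₀)) := by
    calc |-(α * deriv l s) / (2 * (l s + α) ^ 2)|
        = α / (l s + α) * (|deriv l s| / (2 * (l s + α))) := by
          rw [abs_div, abs_neg, abs_mul, abs_of_nonneg hα,
            abs_of_nonneg (by positivity : (0 : ℝ) ≤ 2 * (l s + α) ^ 2)]
          field_simp
      _ ≤ α / (l₀ + α) * (|deriv l s| / (2 * l₀)) := by gcongr; linarith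
  have hβ : 0 ≤ α / (2 * (l s + α)) := by positivity
  calc _ ≤ |-(α * deriv l s) / (2 * (l s + α) ^ 2)| * (r s / l s) ^ 2 +
        α / (2 * (l s + α)) * |deriv (fun t => (r t / l t) ^ 2) s| := by
        refine (abs_add_le _ _).trans_eq ?_
        rw [abs_mul, abs_mul, abs_of_nonneg (sq_nonneg (r s / l s)), abs_of_nonneg hβ]
    _ ≤ α / (l₀ + α) * (|deriv l s| / (2 * l₀)) * (r s / l s) ^ 2 +
        α / (l₀ + α) * |deriv (fun t => (r t / l t) ^ 2) s| :=
        add_le_add (mul_le_mul_of_nonneg_right hβ' (sq_nonneg _))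
          (mul_le_mul_of_nonneg_right (div_two_mul_add_le hl₀ hls hα) (abs_nonneg _))
    _ = _ := by ring

theorem exists_bound_driftCoeff {K : Set ℝ} (hK : IsCompact K) (hl₀ : 0 < l₀)
    (hl : ContDiff ℝ 1 l) (hr : ContDiff ℝ 1 r) (hlK : ∀ s ∈ K, l₀ ≤ l s) :
    ∃ C, ∀ α, 0 ≤ α → ∀ s ∈ K, DifferentiableAt ℝ (driftCoeff l r α) s ∧
      |driftCoeff l r α s| ≤ C * (α / (l₀ + α)) ∧
      |deriv (driftCoeff l r α) s| ≤ C * (α / (l₀ + α)) := by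
  set ψ : ℝ → ℝ := fun t => (r t / l t) ^ 2
  have hU : IsOpen {t | l t ≠ 0} := isOpen_ne_fun hl.continuous continuous_const
  have hKU : K ⊆ {t | l t ≠ 0} := fun s hs => (hl₀.trans_le (hlK s hs)).ne'
  have hψ : ContDiffOn ℝ 1 ψ {t | l t ≠ 0} :=
    (hr.contDiffOn.div hl.contDiffOn fun _ ht => ht).pow 2
  have hB : ContinuousOn (fun t => |deriv l t| / (2 * l₀) * ψ t + |deriv ψ t| + ψ t) K :=
    (((hl.continuous_deriv le_rfl).continuousOn.abs.div_const _).mul (hψ.continuousOn.mono hKU)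
      |>.add ((hψ.continuousOn_deriv_of_isOpen hU le_rfl).mono hKU).abs).add
      (hψ.continuousOn.mono hKU)
  obtain ⟨C, hC⟩ := hK.exists_bound_of_continuousOn hB
  refine ⟨C, fun α hα s hs => ?_⟩
  have hls := hlK s hs
  have hBs : |deriv l s| / (2 * l₀) * ψ s + |deriv ψ s| + ψ s ≤ C :=
    (le_abs_self _).trans (hC s hs)
  have hψs : 0 ≤ ψ s := sq_nonneg _
  have hq : 0 ≤ α / (l₀ + α) := by positivity
  rw [mul_comm C]
  refine ⟨(hasDerivAt_driftCoeff (hl.differentiable one_ne_zero s)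
    (hr.differentiable one_ne_zero s) (hKU hs) (by linarith)).differentiableAt, ?_, ?_⟩
  · refine (abs_driftCoeff_le hl₀ hls hα).trans (mul_le_mul_of_nonneg_left ?_ hq)
    have : 0 ≤ |deriv l s| / (2 * l₀) * ψ s := by positivity
    exact (by linarith [abs_nonneg (deriv ψ s)] : ψ s ≤ C)
  · refine (abs_deriv_driftCoeff_le hl₀ hls hα (hl.differentiable one_ne_zero s)
      (hr.differentiable one_ne_zero s)).trans (mul_le_mul_of_nonneg_left ?_ hq)
    linarith

end DriftCoeff

theorem div_drift_uniform_bound_general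
    (L l₀ : ℝ) (hL : 0 < L) (hl₀ : 0 < l₀)
    (h₁ h₂ : ℝ → ℝ)
    (hreg₁ : ContDiff ℝ 3 h₁) (hreg₂ : ContDiff ℝ 3 h₂)
    (hper₁ : Function.Periodic h₁ L) (hper₂ : Function.Periodic h₂ L)
    (hbd₁ : ∀ x : ℝ, |h₁ x| ≤ 1) (hbd₂ : ∀ x : ℝ, |h₂ x| ≤ 1)
    (l r : ℝ → ℝ) (hlreg : ContDiff ℝ 2 l) (hrreg : ContDiff ℝ 2 r)
    (hlb : ∀ s ∈ Set.Icc (-1 : ℝ) 1, l₀ ≤ l s) :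
    ∃ c : ℝ, 0 < c ∧ ∀ α : ℝ, 0 < α → ∀ x : ℝ × ℝ,
      |divR2 (driftG h₁ h₂ l r α) x| ≤ c * α / (l₀ + α) := by
  obtain ⟨C, hC⟩ := exists_bound_driftCoeff isCompact_Icc hl₀ (hlreg.of_le one_le_two)
    (hrreg.of_le one_le_two) hlb
  have hH : ContDiff ℝ 1 (Ham h₁ h₂) := contDiff_ham (hreg₁.of_le (by norm_num))
    (hreg₂.of_le (by norm_num))
  have hF : ContDiff ℝ 1 fun x => fderiv ℝ (xiField h₁ h₂) x (xiField h₁ h₂ x) :=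
    (contDiff_xiField (n := 2) hreg₁ hreg₂).fderiv_apply_self
  obtain ⟨M, hM⟩ := hF.exists_bound_of_periodic_prod hL hL
    (periodic_xiField_fst hper₁).fderiv_apply_self (periodic_xiField_snd hper₂).fderiv_apply_self
  obtain ⟨N, hN⟩ := hH.exists_bound_of_periodic_prod hL hL
    (periodic_ham_fst hper₁) (periodic_ham_snd hper₂)
  refine ⟨max (C * (2 * M + N * M)) 1, by positivity, fun α hα x => ?_⟩
  obtain ⟨hφd, hφ, hφ'⟩ := hC α hα.le _ (ham_mem_Icc hbd₁ hbd₂ x)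
  have hq : 0 ≤ α / (l₀ + α) := by positivity
  rw [driftG_eq_smul, mul_div_assoc]
  calc _ ≤ |driftCoeff l r α (Ham h₁ h₂ x)| * (2 * ‖fderiv ℝ _ x‖) +
        ‖deriv (driftCoeff l r α) (Ham h₁ h₂ x) • fderiv ℝ (Ham h₁ h₂) x‖ * ‖_‖ :=
        abs_divR2_smul_le (hφd.hasDerivAt.comp_hasFDerivAt x
          (hH.differentiable one_ne_zero x).hasFDerivAt) (hF.differentiable one_ne_zero x)
    _ ≤ C * (α / (l₀ + α)) * (2 * M) + C * (α / (l₀ + α)) * N * M := by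
        rw [norm_smul, Real.norm_eq_abs]
        obtain ⟨hFx, hDFx⟩ := hM x
        obtain ⟨-, hDHx⟩ := hN x
        have hC0 : 0 ≤ C * (α / (l₀ + α)) := (abs_nonneg _).trans hφ
        have hN0 : 0 ≤ N := (norm_nonneg _).trans hDHx
        gcongr
    _ = C * (2 * M + N * M) * (α / (l₀ + α)) := by ring
    _ ≤ max (C * (2 * M + N * M)) 1 * (α / (l₀ + α)) := by gcongr; exact le_max_left _ _

/-- Uniform bound on `div g_α`: there is a constant `c > 0` independent of `α`
such that `|div g_α| ≤ c α/(l₀ + α)` on all of `ℝ²`, for every `α > 0`. -/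
theorem div_drift_uniform_bound
    (L l₀ r₀ : ℝ) (hL : 0 < L) (hl₀ : 0 < l₀) (hr₀ : 0 < r₀)
    (h₁ h₂ : ℝ → ℝ)
    (hreg₁ : ContDiff ℝ 3 h₁) (hreg₂ : ContDiff ℝ 3 h₂)
    (hper₁ : Function.Periodic h₁ L) (hper₂ : Function.Periodic h₂ L)
    (hbd₁ : ∀ x : ℝ, |h₁ x| ≤ 1) (hbd₂ : ∀ x : ℝ, |h₂ x| ≤ 1)
    (hmax₁ : ∃ x : ℝ, |h₁ x| = 1) (hmax₂ : ∃ x : ℝ, |h₂ x| = 1)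
    (l r : ℝ → ℝ) (hlreg : ContDiff ℝ 2 l) (hrreg : ContDiff ℝ 2 r)
    (hlb : ∀ s ∈ Set.Icc (-1 : ℝ) 1, l₀ ≤ l s)
    (hrb : ∀ s ∈ Set.Icc (-1 : ℝ) 1, r₀ ≤ (r s) ^ 2) :
    ∃ c : ℝ, 0 < c ∧ ∀ α : ℝ, 0 < α → ∀ x : ℝ × ℝ,
      |divR2 (driftG h₁ h₂ l r α) x| ≤ c * α / (l₀ + α) :=
  div_drift_uniform_bound_general L l₀ hL hl₀ h₁ h₂ hreg₁ hreg₂ hper₁ hper₂ hbd₁ hbd₂ l r hlreg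
    hrreg hlb
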